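/- Every k×k submatrix of the generator matrix G of an (n,k) BCH-DFT code, formed from any k distinct rows of G, is invertible. -/

import Mathlib

open Matrix Complex Finset

/-- Entry of the (unitary) DFT matrix: `(1/√n)·exp(-2πi·j·l/n)`. -/
noncomputable def dftEntry (n j l : ℕ) : ℂ :=
  (1 / (Real.sqrt n : ℂ)) * Complex.exp (-(2 * Real.pi * Complex.I * j * l) / n)

/-- The unitary `n×n` DFT matrix `W_n`. -/
noncomputable def Wmat (n : ℕ) : Matrix (Fin n) (Fin n) ℂ :=
  Matrix.of fun j l => dftEntry n (j : ℕ) (l : ℕ)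

/-- `α = ⌈n/2⌉ - ⌊(n-k)/2⌋`. -/
def alphaBCH (n k : ℕ) : ℕ := (n + 1) / 2 - (n - k) / 2

/-- The `n×k` selection matrix `Σ` with identity blocks `I_α` (top-left) and
`I_β` (bottom-right), `β = k - α`, and zeros elsewhere. -/
def SigmaMat (n k : ℕ) : Matrix (Fin n) (Fin k) ℂ :=
  Matrix.of fun r c =>
    if ((r : ℕ) = (c : ℕ) ∧ (c : ℕ) < alphaBCH n k) ∨
       ((r : ℕ) = (c : ℕ) + (n - k) ∧ alphaBCH n k ≤ (c : ℕ)) then 1 else 0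

/-- Generator matrix `G = √(n/k)·W_nᴴ·Σ·W_k` of the `(n,k)` BCH-DFT code. -/
noncomputable def Gmat (n k : ℕ) : Matrix (Fin n) (Fin k) ℂ :=
  ((Real.sqrt ((n : ℝ) / k) : ℝ) : ℂ) • ((Wmat n)ᴴ * SigmaMat n k * Wmat k)

/-- Parity-check matrix `H`: its rows are the conjugate transposes of the `n-k`
columns of `W_nᴴ` corresponding to the zero rows `α, …, n-β-1` of `Σ`. -/
noncomputable def Hmat (n k : ℕ) : Matrix (Fin (n - k)) (Fin n) ℂ :=
  Matrix.of fun r i => dftEntry n (alphaBCH n k + (r : ℕ)) (i : ℕ)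

/-!
Writing `ζ = exp(2πi/n)` and `x_r = ζ^{f r}`, the rows `f r` of `W_nᴴ Σ` are `n^{-1/2}` times
`(x_r^{e_c})_c`, where `e_c` runs over the rows `0, …, α-1, n-β, …, n-1` selected by `Σ`.
Since `x_r^n = 1`, these exponents are, modulo `n`, the `k` consecutive integers starting at
`n - k + α` in rotated order, so the submatrix of `W_nᴴ Σ` is a diagonal matrix times a
column-permuted Vandermonde matrix in the distinct `x_r`. Hence it and `W_k` are invertible.
-/

open Function

namespace Matrix

theorem det_of_pow_ne_zero {R : Type*} [CommRing R] [IsDomain R] {k : ℕ} {x : Fin k → R}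
    (hx : Injective x) {e : Fin k → ℕ} (he_lt : ∀ c, e c < k) (he : Injective e) :
    (of fun r c => x r ^ e c).det ≠ 0 := by
  have hσ : Injective fun c => (⟨e c, he_lt c⟩ : Fin k) :=
    fun c c' h => he (congrArg Fin.val h)
  let σ : Equiv.Perm (Fin k) := Equiv.ofBijective _ hσ.bijective_of_finite
  have hM : (of fun r c => x r ^ e c) = (vandermonde x).submatrix id σ := rfl
  rw [hM, det_permute']
  exact mul_ne_zero ((Equiv.Perm.sign σ).isUnit.map (Int.castRingHom R)).ne_zero
    (det_vandermonde_ne_zero_iff.mpr hx)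

end Matrix

def blockIndex (a d c : ℕ) : ℕ := if c < a then c else c + d

theorem det_of_pow_blockIndex_ne_zero {R : Type*} [CommRing R] [IsDomain R] {k a d : ℕ}
    {x : Fin k → R} (hx : Injective x) (hx_pow : ∀ r, x r ^ (d + k) = 1) (ha : a ≤ k) :
    (of fun r (c : Fin k) => x r ^ blockIndex a d c).det ≠ 0 := by
  -- modulo `d + k`, the exponents are `d + a` plus the rotation `c ↦ c - a` of `0, …, k - 1`
  let e : Fin k → ℕ := fun c => if (c : ℕ) < a then c + (k - a) else c - a
  have hpow : ∀ r (c : Fin k), x r ^ blockIndex a d c = x r ^ (d + a) * x r ^ e c := by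
    intro r c
    simp only [blockIndex, e]
    split_ifs
    · rw [← one_mul (x r ^ (c : ℕ)), ← hx_pow r, ← pow_add, ← pow_add]
      congr 1
      omega
    · rw [← pow_add]
      congr 1
      omega
  have hx_ne : ∀ r, x r ≠ 0 := fun r =>
    (IsUnit.of_pow_eq_one (hx_pow r) (by have := r.pos; omega)).ne_zero
  have hM : (of fun r (c : Fin k) => x r ^ blockIndex a d c) =
      of fun r c => x r ^ (d + a) * of (fun r c => x r ^ e c) r c := by
    ext r c
    simp only [of_apply, hpow]
  rw [hM, det_mul_column]
  refine mul_ne_zero (prod_ne_zero_iff.mpr fun r _ => pow_ne_zero _ (hx_ne r))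
    (det_of_pow_ne_zero hx (fun c => ?_) fun c c' h => ?_)
  · simp only [e]
    split_ifs <;> omega
  · simp only [e] at h
    ext
    split_ifs at h <;> omega

noncomputable def dftRoot (n : ℕ) : ℂ := exp (2 * Real.pi * I / n)

theorem dftEntry_eq (n j l : ℕ) :
    dftEntry n j l = (Real.sqrt n : ℂ)⁻¹ * (dftRoot n ^ (j * l))⁻¹ := by
  rw [dftEntry, dftRoot, one_div, ← exp_nat_mul, ← exp_neg]
  congr 2
  push_cast
  ring

theorem star_dftEntry (n j l : ℕ) :
    star (dftEntry n j l) = (Real.sqrt n : ℂ)⁻¹ * dftRoot n ^ (j * l) := by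
  rw [dftEntry, dftRoot, one_div, ← exp_nat_mul, star_mul', Complex.star_def, ← exp_conj]
  simp only [map_inv₀, conj_ofReal, map_div₀, map_neg, map_mul, map_ofNat, conj_I, conj_natCast]
  congr 2
  push_cast
  ring

theorem Wmat_eq_smul_vandermonde (m : ℕ) :
    Wmat m = (Real.sqrt m : ℂ)⁻¹ • vandermonde fun j : Fin m => (dftRoot m)⁻¹ ^ (j : ℕ) := by
  ext j l
  simp only [Wmat, of_apply, dftEntry_eq, Matrix.smul_apply, vandermonde_apply, smul_eq_mul,
    inv_pow, pow_mul]

theorem det_Wmat_ne_zero {m : ℕ} (hm : m ≠ 0) : (Wmat m).det ≠ 0 := by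
  have hζ : IsPrimitiveRoot (dftRoot m)⁻¹ m := (isPrimitiveRoot_exp m hm).inv
  rw [Wmat_eq_smul_vandermonde, det_smul]
  refine mul_ne_zero (pow_ne_zero _ (by simpa using hm)) (det_vandermonde_ne_zero_iff.mpr ?_)
  exact fun j l h => Fin.ext (hζ.pow_inj j.isLt l.isLt h)

theorem SigmaMat_apply (n k : ℕ) (r : Fin n) (c : Fin k) :
    SigmaMat n k r c = if (r : ℕ) = blockIndex (alphaBCH n k) (n - k) c then 1 else 0 := by
  simp only [SigmaMat, of_apply, blockIndex]
  congr 1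
  split_ifs <;> simp only [eq_iff_iff] <;> omega

theorem alphaBCH_le {n k : ℕ} (hk : 1 ≤ k) : alphaBCH n k ≤ k := by
  unfold alphaBCH
  omega

theorem conjTranspose_Wmat_mul_SigmaMat_apply {n k : ℕ} (hkn : k ≤ n) (j : Fin n) (c : Fin k) :
    ((Wmat n)ᴴ * SigmaMat n k) j c =
      (Real.sqrt n : ℂ)⁻¹ * (dftRoot n ^ (j : ℕ)) ^ blockIndex (alphaBCH n k) (n - k) c := by
  have hlt : blockIndex (alphaBCH n k) (n - k) c < n := by
    unfold blockIndex
    split_ifs <;> omega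
  have hsel : ∀ r : Fin n, (r : ℕ) = blockIndex (alphaBCH n k) (n - k) c ↔ r = ⟨_, hlt⟩ :=
    fun r => by rw [Fin.ext_iff]
  simp only [mul_apply, SigmaMat_apply, hsel, mul_ite, mul_one, mul_zero, sum_ite_eq', mem_univ,
    if_true, conjTranspose_apply, Wmat, of_apply, star_dftEntry]
  rw [← pow_mul, mul_comm (j : ℕ)]

theorem Gmat_submatrix_eq {n k : ℕ} (hkn : k ≤ n) (f : Fin k → Fin n) :
    (Gmat n k).submatrix f id = ((Real.sqrt ((n : ℝ) / k) : ℝ) : ℂ) •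
      (((Real.sqrt n : ℂ)⁻¹ • of fun r (c : Fin k) =>
        (dftRoot n ^ (f r : ℕ)) ^ blockIndex (alphaBCH n k) (n - k) c) * Wmat k) := by
  ext r c
  simp only [Gmat, submatrix_apply, id_eq, Matrix.smul_apply, smul_eq_mul]
  rw [mul_apply, mul_apply]
  simp only [Matrix.smul_apply, of_apply, conjTranspose_Wmat_mul_SigmaMat_apply hkn, smul_eq_mul]

/-- **Every `k×k` submatrix of `G` is invertible.** Any `k` distinct rows of the
generator matrix `G` of an `(n,k)` BCH-DFT code form an invertible `k×k` matrix. -/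
theorem Gmat_submatrix_invertible (n k : ℕ) (hk1 : 1 ≤ k) (hkn : k < n)
    (f : Fin k → Fin n) (hf : Function.Injective f) :
    IsUnit ((Gmat n k).submatrix f id).det := by
  have hn : n ≠ 0 := by omega
  have hζ : IsPrimitiveRoot (dftRoot n) n := isPrimitiveRoot_exp n hn
  set x : Fin k → ℂ := fun r => dftRoot n ^ (f r : ℕ)
  have hx : Injective x := fun r r' h => hf (Fin.ext (hζ.pow_inj (f r).isLt (f r').isLt h))
  have hx_pow : ∀ r, x r ^ (n - k + k) = 1 := fun r => by
    rw [Nat.sub_add_cancel hkn.le, ← pow_mul, mul_comm, pow_mul, hζ.pow_eq_one, one_pow]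
  have hscale : ((Real.sqrt ((n : ℝ) / k) : ℝ) : ℂ) ≠ 0 :=
    ofReal_ne_zero.mpr (Real.sqrt_ne_zero'.mpr (div_pos (by exact_mod_cast hn.bot_lt)
      (by exact_mod_cast hk1)))
  have hscale' : (Real.sqrt n : ℂ)⁻¹ ≠ 0 := by simpa using hn
  rw [Gmat_submatrix_eq hkn.le, isUnit_iff_ne_zero, det_smul, det_mul, det_smul]
  exact mul_ne_zero (pow_ne_zero _ hscale) (mul_ne_zero (mul_ne_zero (pow_ne_zero _ hscale')
    (det_of_pow_blockIndex_ne_zero hx hx_pow (alphaBCH_le hk1)))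
    (det_Wmat_ne_zero (Nat.one_le_iff_ne_zero.mp hk1)))
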